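/- arXiv:1709.09795 — 4 statements merged into one kernel-verified Lean document; each statement's English description precedes it below -/
import Mathlib

section
/- Let Φ_ε(x,y) = ε⁻¹·arccos(ε²(x·y) + √((1−ε²|x|²)(1−ε²|y|²))). Then for x, y ∈ ℝ^d with 2⁻³ ≤ |x−y| ≤ 2³, Φ_ε(x,y) converges to |x−y| as ε → 0⁺. -/
/-!
With `g ε` the argument of `arccos` and `D ε = 1 - ε² ⟪x, y⟫ + √(…)` its conjugate, multiplying
out `(1 - g ε) * D ε` gives `1 - g ε = ε² N ε / D ε` with `N ε → ‖x - y‖²` and `D ε → 2`.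
Since `arccos (1 - t) = arcsin √(t (2 - t))` for `t ≤ 1` and `arcsin` has derivative `1` at `0`,
`ε⁻¹ arccos (1 - ε² q) → √(2 lim q)`, which here is `‖x - y‖`.
-/

open Real Set Filter Topology Asymptotics
open scoped RealInnerProductSpace

theorem HasDerivAt.tendsto_comp_mul_sub_div {f : ℝ → ℝ} {f' w₀ : ℝ} {w : ℝ → ℝ}
    {l : Filter ℝ} (hf : HasDerivAt f f' 0) (hl : l ≤ 𝓝[≠] 0) (hw : Tendsto w l (𝓝 w₀)) :
    Tendsto (fun ε => (f (ε * w ε) - f 0) / ε) l (𝓝 (f' * w₀)) := by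
  have hid : Tendsto (fun ε : ℝ => ε) l (𝓝 0) := tendsto_id.mono_left (hl.trans nhdsWithin_le_nhds)
  have hεw : Tendsto (fun ε => ε * w ε) l (𝓝 0) := by simpa using hid.mul hw
  have hsmall : (fun ε => f (ε * w ε) - f 0 - ε * w ε * f') =o[l] fun ε => ε := by
    have := hf.isLittleO.comp_tendsto hεw
    simp only [sub_zero, smul_eq_mul, Function.comp_def] at this
    refine this.trans_isBigO ?_
    simpa using (isBigO_refl (fun ε : ℝ => ε) l).mul (hw.isBigO_one ℝ)
  rw [← zero_add (f' * w₀)]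
  refine (hsmall.tendsto_div_nhds_zero.add (hw.const_mul f')).congr' ?_
  filter_upwards [hl self_mem_nhdsWithin] with ε (hε : ε ≠ 0)
  field_simp
  ring

theorem Real.hasDerivAt_arcsin_zero : HasDerivAt arcsin 1 0 := by
  simpa using hasDerivAt_arcsin (x := 0) (by norm_num) (by norm_num)

theorem Real.tendsto_inv_mul_arccos_one_sub_sq_mul {q : ℝ → ℝ} {L : ℝ}
    (hq : Tendsto q (𝓝[>] 0) (𝓝 L)) :
    Tendsto (fun ε => ε⁻¹ * arccos (1 - ε ^ 2 * q ε)) (𝓝[>] 0) (𝓝 √(2 * L)) := by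
  have hsq : Tendsto (fun ε : ℝ => ε ^ 2) (𝓝[>] 0) (𝓝 0) := by
    simpa using (continuous_pow (M := ℝ) 2).continuousWithinAt (s := Ioi 0) (x := 0) |>.tendsto
  have hw : Tendsto (fun ε => √(q ε * (2 - ε ^ 2 * q ε))) (𝓝[>] 0) (𝓝 √(2 * L)) := by
    simpa [mul_comm] using (hq.mul (tendsto_const_nhds (x := (2 : ℝ)).sub (hsq.mul hq))).sqrt
  have hsmall : ∀ᶠ ε in 𝓝[>] 0, ε ^ 2 * q ε ≤ 1 := by
    simpa using (hsq.mul hq).eventually_le_const (show (0 : ℝ) * L < 1 by simp)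
  have := hasDerivAt_arcsin_zero.tendsto_comp_mul_sub_div
    (nhdsWithin_mono _ fun ε (hε : 0 < ε) => hε.ne') hw
  rw [one_mul] at this
  refine this.congr' ?_
  filter_upwards [self_mem_nhdsWithin, hsmall] with ε (hε : 0 < ε) hle
  rw [arccos_eq_arcsin (by linarith), arcsin_zero, sub_zero, div_eq_inv_mul,
    show 1 - (1 - ε ^ 2 * q ε) ^ 2 = ε ^ 2 * (q ε * (2 - ε ^ 2 * q ε)) by ring,
    sqrt_mul (sq_nonneg ε), sqrt_sq hε.le]

theorem one_sub_inner_add_sqrt_mul_eq {E : Type*} [NormedAddCommGroup E]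
    [InnerProductSpace ℝ E] {x y : E} {ε : ℝ} (hx : ε ^ 2 * ‖x‖ ^ 2 ≤ 1)
    (hy : ε ^ 2 * ‖y‖ ^ 2 ≤ 1) :
    (1 - (ε ^ 2 * ⟪x, y⟫ + √((1 - ε ^ 2 * ‖x‖ ^ 2) * (1 - ε ^ 2 * ‖y‖ ^ 2)))) *
        (1 - ε ^ 2 * ⟪x, y⟫ + √((1 - ε ^ 2 * ‖x‖ ^ 2) * (1 - ε ^ 2 * ‖y‖ ^ 2))) =
      ε ^ 2 * (‖x - y‖ ^ 2 - ε ^ 2 * (‖x‖ ^ 2 * ‖y‖ ^ 2 - ⟪x, y⟫ ^ 2)) := by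
  have hroot := sq_sqrt (mul_nonneg (sub_nonneg.2 hx) (sub_nonneg.2 hy))
  rw [norm_sub_sq_real]
  linear_combination -hroot

theorem Phi_eps_tendsto_general (d : ℕ) (x y : EuclideanSpace ℝ (Fin d)) :
    Filter.Tendsto
      (fun ε : ℝ =>
        ε⁻¹ * Real.arccos (ε^2 * ⟪x, y⟫ +
          Real.sqrt ((1 - ε^2 * ‖x‖^2) * (1 - ε^2 * ‖y‖^2))))
      (nhdsWithin (0:ℝ) (Set.Ioi 0))
      (nhds ‖x - y‖) := by
  have hlim {f : ℝ → ℝ} (hf : Continuous f) : Tendsto f (𝓝[>] 0) (𝓝 (f 0)) :=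
    hf.continuousWithinAt.tendsto
  set D : ℝ → ℝ :=
    fun ε => 1 - ε ^ 2 * ⟪x, y⟫ + √((1 - ε ^ 2 * ‖x‖ ^ 2) * (1 - ε ^ 2 * ‖y‖ ^ 2))
  set N : ℝ → ℝ := fun ε => ‖x - y‖ ^ 2 - ε ^ 2 * (‖x‖ ^ 2 * ‖y‖ ^ 2 - ⟪x, y⟫ ^ 2)
  have hD : Tendsto D (𝓝[>] 0) (𝓝 2) := by
    simpa [D, one_add_one_eq_two] using hlim (f := D) (by fun_prop)
  have hN : Tendsto N (𝓝[>] 0) (𝓝 (‖x - y‖ ^ 2)) := by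
    simpa [N] using hlim (f := N) (by fun_prop)
  have hsmall (a : ℝ) : ∀ᶠ ε in 𝓝[>] (0 : ℝ), ε ^ 2 * a ≤ 1 :=
    (hlim (f := fun ε => ε ^ 2 * a) (by fun_prop)).eventually_le_const (by simp)
  have hlift : ∀ᶠ ε in 𝓝[>] (0 : ℝ), 1 - ε ^ 2 * (N ε / D ε) =
      ε ^ 2 * ⟪x, y⟫ + √((1 - ε ^ 2 * ‖x‖ ^ 2) * (1 - ε ^ 2 * ‖y‖ ^ 2)) := by
    filter_upwards [hsmall (‖x‖ ^ 2), hsmall (‖y‖ ^ 2), hD.eventually_ne two_ne_zero]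
      with ε hx hy hDε
    rw [← mul_div_assoc, ← one_sub_inner_add_sqrt_mul_eq hx hy, mul_div_cancel_right₀ _ hDε]
    ring
  have := tendsto_inv_mul_arccos_one_sub_sq_mul (q := fun ε => N ε / D ε) (hN.div hD two_ne_zero)
  rw [mul_div_cancel₀ _ two_ne_zero, sqrt_sq (norm_nonneg _)] at this
  exact this.congr' (hlift.mono fun ε h => by rw [h])

theorem Phi_eps_tendsto (d : ℕ) (x y : EuclideanSpace ℝ (Fin d))
    (h₁ : (2:ℝ)^(-3:ℤ) ≤ ‖x - y‖) (h₂ : ‖x - y‖ ≤ (2:ℝ)^(3:ℤ)) :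
    Filter.Tendsto
      (fun ε : ℝ =>
        ε⁻¹ * Real.arccos (ε^2 * ⟪x, y⟫ +
          Real.sqrt ((1 - ε^2 * ‖x‖^2) * (1 - ε^2 * ‖y‖^2))))
      (nhdsWithin (0:ℝ) (Set.Ioi 0))
      (nhds ‖x - y‖) :=
  Phi_eps_tendsto_general d x y
end

section
/- Let α ≠ 0 be real. If α > 0, then (1/(2π)) ∫_ℝ e^{its}/(is+α) ds = e^{−tα}·1_{(0,∞)}(t) for t ≠ 0, and if α < 0, then (1/(2π)) ∫_ℝ e^{its}/(is+α) ds = −e^{−tα}·1_{(−∞,0)}(t) for t ≠ 0, where the integral is understood as an improper (principal value) integral. -/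
/-!
For `α > 0`, `(is + α)⁻¹ = ∫₀^∞ e^{-αu} e^{-isu} du` is the Fourier transform of
`g(u) = 1_{u > 0} e^{-αu}`; for `α < 0` it is that of `g(u) = -1_{u < 0} e^{-αu}`. By Fubini, the
truncated inversion integral `∫_{-R}^{R} e^{its} ĝ(s) ds` equals `∫ D_R(u - t) g(u) du`, where
`D_R(v) = ∫_{-R}^{R} e^{isv} ds = 2 sin(Rv) / v` is the Dirichlet kernel. As `g` is differentiable
at `t ≠ 0`, the quotient `(g(u) - g(t)) / (u - t)` is integrable near `t`, so by the
Riemann–Lebesgue lemma everything except `g(t) ∫_{-δ}^{δ} D_R` tends to `0`, and that term tends to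
`2π g(t)` by Dirichlet's integral `∫₀^∞ sin v / v = π / 2`. The latter follows from
`1 / v = ∫₀^∞ e^{-vx} dx`, Fubini, and dominated convergence.
-/

open Real Set Filter MeasureTheory Topology Asymptotics
open Complex (I)
open scoped Complex

theorem integral_exp_neg_mul_mul_sin (x T : ℝ) :
    ∫ v in (0:ℝ)..T, exp (-(x * v)) * sin v
      = (1 - exp (-(x * T)) * (x * sin T + cos T)) / (1 + x ^ 2) := by
  have hx : (1:ℝ) + x ^ 2 ≠ 0 := by positivity
  have hderiv (v : ℝ) : HasDerivAt (fun v ↦ -(exp (-(x * v)) * (x * sin v + cos v)) / (1 + x ^ 2))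
      (exp (-(x * v)) * sin v) v := by
    have := ((((hasDerivAt_id v).const_mul x).neg.exp).mul
      (((hasDerivAt_sin v).const_mul x).add (hasDerivAt_cos v))).neg.div_const (1 + x ^ 2)
    refine this.congr_deriv ?_
    simp only [Pi.neg_apply, Pi.add_apply, id]
    field_simp
    ring
  rw [intervalIntegral.integral_eq_sub_of_hasDerivAt (fun v _ ↦ hderiv v)
    (Continuous.intervalIntegrable (by fun_prop) _ _)]
  simp only [mul_zero, neg_zero, exp_zero, sin_zero, cos_zero, zero_add, mul_one]
  ring

theorem integral_exp_neg_mul_Ioi {v : ℝ} (hv : 0 < v) :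
    ∫ x in Ioi (0:ℝ), exp (-(v * x)) = v⁻¹ := by
  simpa [neg_mul] using integral_exp_mul_Ioi (neg_lt_zero.mpr hv) 0

theorem integral_sinc_eq_integral_Ioi {T : ℝ} (hT : 0 ≤ T) :
    ∫ v in (0:ℝ)..T, sinc v
      = ∫ x in Ioi (0:ℝ), (1 - exp (-(x * T)) * (x * sin T + cos T)) / (1 + x ^ 2) := by
  set F : ℝ × ℝ → ℝ := fun p ↦ exp (-(p.1 * p.2)) * sin p.1
  have hF : Integrable F ((volume.restrict (Ioc 0 T)).prod (volume.restrict (Ioi 0))) := by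
    have hmeas : AEStronglyMeasurable F
        ((volume.restrict (Ioc 0 T)).prod (volume.restrict (Ioi 0))) := by fun_prop
    refine (integrable_prod_iff hmeas).mpr ⟨?_, ?_⟩
    · filter_upwards [ae_restrict_mem measurableSet_Ioc] with v hv
      simpa [F, mul_comm v] using (exp_neg_integrableOn_Ioi 0 hv.1).mul_const (sin v)
    · refine Integrable.mono' (integrable_const 1) hmeas.norm.integral_prod_right' ?_
      filter_upwards [ae_restrict_mem measurableSet_Ioc] with v hv
      have : ∫ x in Ioi (0:ℝ), ‖F (v, x)‖ = v⁻¹ * |sin v| := by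
        simp_rw [F, norm_mul, norm_of_nonneg (exp_pos _).le, integral_mul_const,
          integral_exp_neg_mul_Ioi hv.1, Real.norm_eq_abs]
      rw [this, norm_of_nonneg (mul_nonneg (inv_nonneg.mpr hv.1.le) (abs_nonneg _)),
        inv_mul_le_iff₀ hv.1, mul_one]
      exact abs_sin_le_abs.trans_eq (abs_of_pos hv.1)
  calc ∫ v in (0:ℝ)..T, sinc v
      = ∫ v in Ioc 0 T, ∫ x in Ioi (0:ℝ), F (v, x) := by
        rw [intervalIntegral.integral_of_le hT]
        refine setIntegral_congr_fun measurableSet_Ioc fun v hv ↦ ?_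
        simp only [F]
        rw [integral_mul_const, integral_exp_neg_mul_Ioi hv.1, sinc_of_ne_zero hv.1.ne',
          div_eq_inv_mul]
    _ = ∫ x in Ioi (0:ℝ), ∫ v in Ioc 0 T, F (v, x) := integral_integral_swap hF
    _ = _ := by
        refine setIntegral_congr_fun measurableSet_Ioi fun x _ ↦ ?_
        rw [← intervalIntegral.integral_of_le hT, ← integral_exp_neg_mul_mul_sin]
        simp only [F, mul_comm x]

theorem abs_exp_neg_mul_mul_add_le {x : ℝ} (hx : 0 ≤ x) (T : ℝ) :
    |exp (-(x * T)) * (x * sin T + cos T)| ≤ exp (-(x * T)) * (x + 1) := by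
  rw [abs_mul, abs_of_pos (exp_pos _)]
  gcongr
  calc |x * sin T + cos T| ≤ x * |sin T| + |cos T| := by
        simpa [abs_mul, abs_of_nonneg hx] using abs_add_le (x * sin T) (cos T)
    _ ≤ x * 1 + 1 := by gcongr <;> simp [abs_sin_le_one, abs_cos_le_one]
    _ = x + 1 := by ring

theorem tendsto_integral_sinc_atTop :
    Tendsto (fun T ↦ ∫ v in (0:ℝ)..T, sinc v) atTop (𝓝 (π / 2)) := by
  have hlim : Tendsto (fun T ↦ ∫ x in Ioi (0:ℝ),
      (1 - exp (-(x * T)) * (x * sin T + cos T)) / (1 + x ^ 2)) atTop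
      (𝓝 (∫ x in Ioi (0:ℝ), (1 + x ^ 2)⁻¹)) := by
    refine tendsto_integral_filter_of_dominated_convergence (fun x ↦ 2 * (1 + x ^ 2)⁻¹)
      (Eventually.of_forall fun T ↦ ?_) ?_
      (integrable_inv_one_add_sq.integrableOn.const_mul 2) ?_
    · exact (Continuous.div (by fun_prop) (by fun_prop) fun x ↦ by positivity).aestronglyMeasurable
    · filter_upwards [eventually_ge_atTop 1] with T hT
      filter_upwards [ae_restrict_mem measurableSet_Ioi] with x (hx : 0 < x)
      have hsmall : |exp (-(x * T)) * (x * sin T + cos T)| ≤ 1 := calc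
        _ ≤ exp (-(x * T)) * (x + 1) := abs_exp_neg_mul_mul_add_le hx.le T
        _ ≤ exp (-x) * exp x := by
          gcongr
          · nlinarith
          · linarith [add_one_le_exp x]
        _ = 1 := by rw [← exp_add, neg_add_cancel, exp_zero]
      rw [norm_div, norm_of_nonneg (by positivity : (0:ℝ) ≤ 1 + x ^ 2), div_eq_mul_inv]
      gcongr
      exact (norm_sub_le _ _).trans (by simp only [norm_one, Real.norm_eq_abs]; linarith)
    · filter_upwards [ae_restrict_mem measurableSet_Ioi] with x (hx : 0 < x)
      have hdecay : Tendsto (fun T ↦ exp (-(x * T)) * (x + 1)) atTop (𝓝 0) := by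
        simpa using (tendsto_exp_atBot.comp
          (tendsto_neg_atBot_iff.mpr (tendsto_id.const_mul_atTop hx))).mul_const (x + 1)
      have := (squeeze_zero_norm (f := fun T ↦ exp (-(x * T)) * (x * sin T + cos T))
        (abs_exp_neg_mul_mul_add_le hx.le) hdecay).const_sub 1
      simpa [div_eq_mul_inv] using this.mul_const (1 + x ^ 2)⁻¹
  rw [integral_Ioi_inv_one_add_sq, arctan_zero, sub_zero] at hlim
  exact hlim.congr' <| (eventually_ge_atTop 0).mono fun T hT ↦
    (integral_sinc_eq_integral_Ioi hT).symm

theorem integral_sinc_neg_eq_two_mul (T : ℝ) :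
    ∫ v in -T..T, sinc v = 2 * ∫ v in (0:ℝ)..T, sinc v := by
  have hsym : ∫ v in -T..0, sinc v = ∫ v in (0:ℝ)..T, sinc v := by
    simpa [sinc_neg] using (intervalIntegral.integral_comp_neg (a := 0) (b := T) sinc).symm
  rw [← intervalIntegral.integral_add_adjacent_intervals (b := 0)
    (continuous_sinc.intervalIntegrable _ _) (continuous_sinc.intervalIntegrable _ _), hsym, two_mul]

noncomputable def dirichletKernel (R v : ℝ) : ℝ := 2 * R * sinc (R * v)

theorem dirichletKernel_of_ne_zero {v : ℝ} (hv : v ≠ 0) (R : ℝ) :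
    dirichletKernel R v = 2 * sin (R * v) * v⁻¹ := by
  rcases eq_or_ne R 0 with rfl | hR
  · simp [dirichletKernel]
  rw [dirichletKernel, sinc_of_ne_zero (mul_ne_zero hR hv)]
  field_simp

theorem integral_exp_mul_mul_I_eq_dirichletKernel (R v : ℝ) :
    ∫ s in -R..R, cexp (s * v * I) = (dirichletKernel R v : ℂ) := by
  rcases eq_or_ne v 0 with rfl | hv
  · simp [dirichletKernel, two_mul]
  have := intervalIntegral.integral_comp_mul_right (fun y : ℝ ↦ cexp (y * I)) (a := -R) (b := R) hv
  push_cast at this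
  rw [this, neg_mul, integral_exp_mul_I_eq_sinc, Complex.real_smul, dirichletKernel]
  have : (v : ℂ) ≠ 0 := Complex.ofReal_ne_zero.mpr hv
  push_cast
  field_simp

theorem tendsto_integral_dirichletKernel {δ : ℝ} (hδ : 0 < δ) :
    Tendsto (fun R ↦ ∫ v in -δ..δ, dirichletKernel R v) atTop (𝓝 (2 * π)) := by
  have := (tendsto_integral_sinc_atTop.comp (tendsto_id.atTop_mul_const hδ)).const_mul 4
  rw [show 4 * (π / 2) = 2 * π by ring] at this
  refine this.congr' <| (eventually_gt_atTop 0).mono fun R hR ↦ ?_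
  dsimp only [Function.comp_apply, id, dirichletKernel]
  rw [intervalIntegral.integral_const_mul, intervalIntegral.integral_comp_mul_left _ hR.ne',
    mul_neg, integral_sinc_neg_eq_two_mul, smul_eq_mul]
  field_simp
  ring

section RiemannLebesgue

variable {E : Type*} [NormedAddCommGroup E] [NormedSpace ℂ E]

theorem tendsto_integral_exp_mul_I_smul_cocompact (h : ℝ → E) :
    Tendsto (fun ξ : ℝ ↦ ∫ u : ℝ, cexp (ξ * u * I) • h u) (cocompact ℝ) (𝓝 0) := by
  have hc : -(2 * π)⁻¹ ≠ 0 := by simp [pi_ne_zero]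
  refine ((Real.tendsto_integral_exp_smul_cocompact h).comp
    (Homeomorph.mulLeft₀ _ hc).isClosedEmbedding.tendsto_cocompact).congr fun ξ ↦ ?_
  refine integral_congr_ae (Eventually.of_forall fun u ↦ ?_)
  simp only [Homeomorph.coe_mulLeft₀, Circle.smul_def, Real.fourierChar_apply]
  congr 2
  push_cast
  field_simp

theorem ofReal_sin_eq_exp_sub_exp (θ : ℝ) :
    (sin θ : ℂ) = (2 * I)⁻¹ * (cexp (θ * I) - cexp (-θ * I)) := by
  rw [Complex.ofReal_sin, Complex.sin]
  field_simp
  ring_nf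
  simp [Complex.I_sq]

theorem tendsto_integral_sin_mul_smul_atTop {h : ℝ → E} (hh : Integrable h) :
    Tendsto (fun R : ℝ ↦ ∫ u, sin (R * u) • h u) atTop (𝓝 0) := by
  have hint (ξ : ℝ) : Integrable (fun u : ℝ ↦ cexp (ξ * u * I) • h u) :=
    hh.bdd_smul 1 (by fun_prop) (Eventually.of_forall fun u ↦ by
      rw [← Complex.ofReal_mul, Complex.norm_exp_ofReal_mul_I])
  have hF := tendsto_integral_exp_mul_I_smul_cocompact h
  have := ((hF.comp (tendsto_id.mono_right atTop_le_cocompact)).sub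
    (hF.comp (tendsto_neg_atTop_atBot.mono_right atBot_le_cocompact))).const_smul (2 * I)⁻¹
  rw [sub_zero, smul_zero] at this
  refine this.congr fun R ↦ ?_
  rw [Function.comp_apply, Function.comp_apply, id, ← integral_sub (hint R) (hint (-R)),
    ← integral_smul]
  refine integral_congr_ae (Eventually.of_forall fun u ↦ ?_)
  dsimp only
  rw [← Complex.coe_smul, ofReal_sin_eq_exp_sub_exp, mul_smul, sub_smul]
  push_cast
  ring_nf

end RiemannLebesgue

section DiniQuotient

variable {E : Type*} [NormedAddCommGroup E] [NormedSpace ℝ E]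

noncomputable def diniQuotient (g : ℝ → E) (t δ u : ℝ) : E :=
  (u - t)⁻¹ • (g u - (Metric.closedBall t δ).indicator (fun _ ↦ g t) u)

theorem integrable_diniQuotient {g : ℝ → E} (hg : Integrable g) {t δ C : ℝ} (hδ : 0 < δ)
    (hC : ∀ u ∈ Metric.closedBall t δ, ‖(u - t)⁻¹ • (g u - g t)‖ ≤ C) :
    Integrable (diniQuotient g t δ) := by
  refine Integrable.mono'
    (g := fun u ↦ (Metric.closedBall t δ).indicator (fun _ ↦ C) u + δ⁻¹ * ‖g u‖)
    (((integrableOn_const (measure_closedBall_lt_top).ne).integrable_indicator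
      measurableSet_closedBall).add (hg.norm.const_mul _))
    ((by fun_prop : Measurable fun u : ℝ ↦ (u - t)⁻¹).aestronglyMeasurable.smul
      (hg.aestronglyMeasurable.sub (aestronglyMeasurable_const.indicator measurableSet_closedBall)))
    (Eventually.of_forall fun u ↦ ?_)
  by_cases hu : u ∈ Metric.closedBall t δ
  · simp only [diniQuotient, indicator_of_mem hu]
    linarith [hC u hu, mul_nonneg (inv_nonneg.mpr hδ.le) (norm_nonneg (g u))]
  · have hfar : δ < |u - t| := by simpa [Real.dist_eq] using hu
    simp only [diniQuotient, indicator_of_notMem hu, sub_zero, zero_add, norm_smul, norm_inv,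
      Real.norm_eq_abs]
    gcongr

theorem integral_dirichletKernel_smul_eq [CompleteSpace E] {g : ℝ → E} {t δ : ℝ} (hδ : 0 ≤ δ)
    (hq : Integrable (diniQuotient g t δ)) (R : ℝ) :
    ∫ u, dirichletKernel R (u - t) • g u
      = (2:ℝ) • (∫ u, sin (R * (u - t)) • diniQuotient g t δ u)
        + (∫ v in -δ..δ, dirichletKernel R v) • g t := by
  have hpt (u : ℝ) : dirichletKernel R (u - t) • g u
      = (2:ℝ) • sin (R * (u - t)) • diniQuotient g t δ u
        + (Metric.closedBall t δ).indicator (fun u ↦ dirichletKernel R (u - t)) u • g t := by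
    rcases eq_or_ne u t with rfl | hu
    · simp [diniQuotient, dirichletKernel, Metric.mem_closedBall_self hδ]
    have hk := dirichletKernel_of_ne_zero (sub_ne_zero.mpr hu) R
    by_cases hb : u ∈ Metric.closedBall t δ
    · simp only [diniQuotient, indicator_of_mem hb, hk]
      module
    · simp only [diniQuotient, indicator_of_notMem hb, hk]
      module
  have hA : Integrable (fun u ↦ (2:ℝ) • sin (R * (u - t)) • diniQuotient g t δ u) :=
    (hq.bdd_smul (φ := fun u ↦ sin (R * (u - t))) 1 (by fun_prop)
      (Eventually.of_forall fun u ↦ abs_sin_le_one _)).smul (2:ℝ)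
  have hB : Integrable
      (fun u ↦ (Metric.closedBall t δ).indicator (fun u ↦ dirichletKernel R (u - t)) u • g t) :=
    (((by fun_prop : Continuous fun u ↦ 2 * R * sinc (R * (u - t))).continuousOn.integrableOn_compact
      (isCompact_closedBall t δ)).integrable_indicator measurableSet_closedBall).smul_const _
  simp_rw [hpt]
  rw [integral_add hA hB, integral_smul, integral_smul_const,
    integral_indicator measurableSet_closedBall, Real.closedBall_eq_Icc,
    integral_Icc_eq_integral_Ioc, ← intervalIntegral.integral_of_le (by linarith),
    intervalIntegral.integral_comp_sub_right (dirichletKernel R), sub_sub_cancel_left,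
    add_sub_cancel_left]

end DiniQuotient

section Inversion

variable {E : Type*} [NormedAddCommGroup E] [NormedSpace ℂ E] [CompleteSpace E]

theorem tendsto_integral_dirichletKernel_smul {g : ℝ → E} (hg : Integrable g) {t : ℝ}
    (hdini : (fun u ↦ g u - g t) =O[𝓝 t] fun u ↦ u - t) :
    Tendsto (fun R ↦ ∫ u, dirichletKernel R (u - t) • g u) atTop (𝓝 ((2 * π) • g t)) := by
  obtain ⟨C, hC, hbound⟩ := hdini.exists_pos
  obtain ⟨δ, hδ, hball⟩ := Metric.nhds_basis_closedBall.eventually_iff.mp hbound.bound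
  have hq : Integrable (diniQuotient g t δ) := integrable_diniQuotient hg hδ fun u hu ↦ by
    rcases eq_or_ne u t with rfl | hu'
    · simpa using hC.le
    have : ‖u - t‖ ≠ 0 := norm_ne_zero_iff.mpr (sub_ne_zero.mpr hu')
    rw [norm_smul, norm_inv]
    calc ‖u - t‖⁻¹ * ‖g u - g t‖ ≤ ‖u - t‖⁻¹ * (C * ‖u - t‖) := by gcongr; exact hball hu
      _ = C := by field_simp
  have hRL : Tendsto (fun R ↦ ∫ u, sin (R * (u - t)) • diniQuotient g t δ u) atTop (𝓝 0) := by
    refine (tendsto_integral_sin_mul_smul_atTop (hq.comp_add_right t)).congr fun R ↦ ?_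
    simpa using integral_add_right_eq_self (fun u ↦ sin (R * (u - t)) • diniQuotient g t δ u) t
  have := (hRL.const_smul (2:ℝ)).add ((tendsto_integral_dirichletKernel hδ).smul_const (g t))
  rw [smul_zero, zero_add] at this
  exact this.congr fun R ↦ (integral_dirichletKernel_smul_eq hδ.le hq R).symm

/-- The Fourier transform in the angular-frequency convention `ĝ(s) = ∫ e^{-isu} g(u) du`
(Mathlib's `𝓕` uses `e^{-2πisu}`). -/
noncomputable def angularFourier (g : ℝ → E) (s : ℝ) : E := ∫ u : ℝ, cexp (-(I * s * u)) • g u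

theorem integral_exp_smul_angularFourier {g : ℝ → E} (hg : Integrable g) (t : ℝ) {R : ℝ}
    (hR : 0 ≤ R) :
    ∫ s in -R..R, cexp (I * t * s) • angularFourier g s = ∫ u, dirichletKernel R (u - t) • g u := by
  set F : ℝ × ℝ → E := fun p ↦ cexp (p.1 * (t - p.2 : ℝ) * I) • g p.2
  have hF : Integrable F ((volume.restrict (Ioc (-R) R)).prod volume) := by
    refine Integrable.mono' ((integrable_const (1:ℝ)).mul_prod hg.norm)
      ((by fun_prop : Continuous fun p : ℝ × ℝ ↦ cexp (p.1 * (t - p.2 : ℝ) * I)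
        ).aestronglyMeasurable.smul hg.aestronglyMeasurable.comp_snd)
      (Eventually.of_forall fun p ↦ ?_)
    rw [norm_smul, ← Complex.ofReal_mul, Complex.norm_exp_ofReal_mul_I, one_mul]
  calc ∫ s in -R..R, cexp (I * t * s) • angularFourier g s
      = ∫ s in Ioc (-R) R, ∫ u, F (s, u) := by
        rw [intervalIntegral.integral_of_le (by linarith)]
        refine setIntegral_congr_fun measurableSet_Ioc fun s _ ↦ ?_
        rw [angularFourier, ← integral_smul]
        refine integral_congr_ae (Eventually.of_forall fun u ↦ ?_)
        simp only [F, smul_smul, ← Complex.exp_add]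
        push_cast
        ring_nf
    _ = ∫ u, ∫ s in Ioc (-R) R, F (s, u) := integral_integral_swap hF
    _ = ∫ u, dirichletKernel R (u - t) • g u := by
        refine integral_congr_ae (Eventually.of_forall fun u ↦ ?_)
        dsimp only [F]
        rw [integral_smul_const, ← intervalIntegral.integral_of_le (by linarith),
          integral_exp_mul_mul_I_eq_dirichletKernel, Complex.coe_smul, dirichletKernel, dirichletKernel,
          ← neg_sub u t, mul_neg, sinc_neg]

theorem MeasureTheory.Integrable.tendsto_principalValue_angularFourier_inversion {g : ℝ → E}
    (hg : Integrable g) {t : ℝ} (hdini : (fun u ↦ g u - g t) =O[𝓝 t] fun u ↦ u - t) :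
    Tendsto (fun R ↦ ∫ s in -R..R, cexp (I * t * s) • angularFourier g s) atTop
      (𝓝 ((2 * π) • g t)) :=
  (tendsto_integral_dirichletKernel_smul hg hdini).congr' <| (eventually_ge_atTop 0).mono
    fun _ hR ↦ (integral_exp_smul_angularFourier hg t hR).symm

end Inversion

theorem DifferentiableAt.indicator_of_notMem_frontier {𝕜 E F : Type*} [NontriviallyNormedField 𝕜]
    [NormedAddCommGroup E] [NormedSpace 𝕜 E] [NormedAddCommGroup F] [NormedSpace 𝕜 F] {f : E → F}
    {s : Set E} {x : E} (hf : DifferentiableAt 𝕜 f x) (hx : x ∉ frontier s) :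
    DifferentiableAt 𝕜 (s.indicator f) x := by
  rw [← mem_compl_iff, compl_frontier_eq_union_interior] at hx
  rcases hx with hx | hx
  · exact hf.congr_of_eventuallyEq <| eventuallyEq_of_mem (mem_interior_iff_mem_nhds.mp hx)
      fun u hu ↦ indicator_of_mem hu f
  · exact (differentiableAt_const (0 : F)).congr_of_eventuallyEq <|
      eventuallyEq_of_mem (mem_interior_iff_mem_nhds.mp hx) fun u hu ↦ indicator_of_notMem hu f

theorem angularFourier_indicator_Ioi {α : ℝ} (hα : 0 < α) (s : ℝ) :
    angularFourier ((Ioi 0).indicator fun u : ℝ ↦ cexp (-α * u)) s = (I * s + α)⁻¹ := by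
  have hre : (-(I * s + α)).re < 0 := by simp [hα]
  calc angularFourier ((Ioi 0).indicator fun u : ℝ ↦ cexp (-α * u)) s
      = ∫ u : ℝ in Ioi 0, cexp (-(I * s + α) * u) := by
        rw [angularFourier, ← integral_indicator measurableSet_Ioi]
        congr 1 with u
        by_cases hu : u ∈ Ioi 0 <;> simp [hu, ← Complex.exp_add, add_mul, add_comm]
    _ = (I * s + α)⁻¹ := by
        rw [integral_exp_mul_complex_Ioi hre, Complex.ofReal_zero, mul_zero, Complex.exp_zero,
          neg_div_neg_eq, one_div]

theorem angularFourier_indicator_Iio {α : ℝ} (hα : α < 0) (s : ℝ) :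
    angularFourier ((Iio 0).indicator fun u : ℝ ↦ -cexp (-α * u)) s = (I * s + α)⁻¹ := by
  have hre : 0 < (-(I * s + α)).re := by simp [hα]
  calc angularFourier ((Iio 0).indicator fun u : ℝ ↦ -cexp (-α * u)) s
      = -∫ u : ℝ in Iic 0, cexp (-(I * s + α) * u) := by
        rw [angularFourier, integral_Iic_eq_integral_Iio, ← integral_neg,
          ← integral_indicator measurableSet_Iio]
        congr 1 with u
        by_cases hu : u ∈ Iio 0 <;> simp [hu, ← Complex.exp_add, add_mul, add_comm]
    _ = (I * s + α)⁻¹ := by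
        rw [integral_exp_mul_complex_Iic hre, Complex.ofReal_zero, mul_zero, Complex.exp_zero,
          div_neg, neg_neg, one_div]

theorem tendsto_principalValue_exp_div {α t : ℝ} {g : ℝ → ℂ} (hg : Integrable g)
    (hdiff : DifferentiableAt ℝ g t) (hfourier : ∀ s : ℝ, angularFourier g s = (I * s + α)⁻¹) :
    Tendsto (fun R : ℝ ↦ (1 / (2 * π) : ℂ) * ∫ s in -R..R, cexp (I * t * s) / (I * s + α)) atTop
      (𝓝 (g t)) := by
  have := (hg.tendsto_principalValue_angularFourier_inversion
    hdiff.hasFDerivAt.isBigO_sub).const_mul (1 / (2 * π) : ℂ)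
  simp_rw [hfourier, smul_eq_mul, ← div_eq_mul_inv, Complex.real_smul] at this
  convert this using 2
  push_cast
  field_simp [pi_ne_zero]

theorem principal_value_exp_div_general (α : ℝ) (t : ℝ) (ht : t ≠ 0) :
    (0 < α →
      Filter.Tendsto
        (fun R : ℝ => (1/(2*Real.pi) : ℂ) *
          ∫ s in (-R)..R, Complex.exp (Complex.I * t * s) / (Complex.I * s + α))
        Filter.atTop
        (nhds ((Real.exp (-t*α) * Set.indicator (Set.Ioi (0:ℝ)) (fun _ => (1:ℝ)) t : ℝ) : ℂ))) ∧
    (α < 0 →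
      Filter.Tendsto
        (fun R : ℝ => (1/(2*Real.pi) : ℂ) *
          ∫ s in (-R)..R, Complex.exp (Complex.I * t * s) / (Complex.I * s + α))
        Filter.atTop
        (nhds ((-(Real.exp (-t*α) * Set.indicator (Set.Iio (0:ℝ)) (fun _ => (1:ℝ)) t) : ℝ) : ℂ))) := by
  have hexp : DifferentiableAt ℝ (fun u : ℝ ↦ cexp (-α * u)) t := by fun_prop
  constructor
  · intro hα
    convert tendsto_principalValue_exp_div
      ((integrableOn_exp_mul_complex_Ioi (by simpa using hα) 0).integrable_indicator
        measurableSet_Ioi)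
      (hexp.indicator_of_notMem_frontier (by simpa using ht)) (angularFourier_indicator_Ioi hα)
      using 2
    by_cases h : t ∈ Ioi 0 <;> simp [h, mul_comm]
  · intro hα
    convert tendsto_principalValue_exp_div
      ((integrableOn_exp_mul_complex_Iic (by simpa using hα) 0).mono_set Iio_subset_Iic_self
        |>.neg.integrable_indicator measurableSet_Iio)
      (hexp.neg.indicator_of_notMem_frontier (by simpa using ht)) (angularFourier_indicator_Iio hα)
      using 2
    by_cases h : t ∈ Iio 0 <;> simp [h, mul_comm]

theorem principal_value_exp_div (α : ℝ) (hα : α ≠ 0) (t : ℝ) (ht : t ≠ 0) :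
    (0 < α →
      Filter.Tendsto
        (fun R : ℝ => (1/(2*Real.pi) : ℂ) *
          ∫ s in (-R)..R, Complex.exp (Complex.I * t * s) / (Complex.I * s + α))
        Filter.atTop
        (nhds ((Real.exp (-t*α) * Set.indicator (Set.Ioi (0:ℝ)) (fun _ => (1:ℝ)) t : ℝ) : ℂ))) ∧
    (α < 0 →
      Filter.Tendsto
        (fun R : ℝ => (1/(2*Real.pi) : ℂ) *
          ∫ s in (-R)..R, Complex.exp (Complex.I * t * s) / (Complex.I * s + α))
        Filter.atTop
        (nhds ((-(Real.exp (-t*α) * Set.indicator (Set.Iio (0:ℝ)) (fun _ => (1:ℝ)) t) : ℝ) : ℂ))) :=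
  principal_value_exp_div_general α t ht
end

section
/- Let α < 0 and g be a Schwartz function on ℝ. Then (1/(2π)) ∫_ℝ (e^{its}/(is+α))·ĝ(s) ds = −∫_{t}^{∞} e^{−(t−s)α} g(s) ds. -/
/-!
For `Re c < 0` one has `c⁻¹ = -∫₀^∞ e^{cu} du`. Inserting this with `c = is + α` and
exchanging the `s`- and `u`-integrals (absolutely convergent because `α < 0` and `ĝ` is
integrable), Fourier inversion turns the `s`-integral into `2π e^{αu} g(t + u)`, which leaves
`-∫₀^∞ e^{αu} g(t + u) du`, i.e. the right-hand side after the shift `s = t + u`.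
-/

open Real Set Filter Complex MeasureTheory FourierTransform

theorem setIntegral_Ioi_comp_add_left {E : Type*} [NormedAddCommGroup E] [NormedSpace ℝ E]
    (f : ℝ → E) (t : ℝ) : ∫ u in Ioi 0, f (t + u) = ∫ s in Ioi t, f s := by
  simpa using (measurePreserving_add_left volume t).setIntegral_preimage_emb
    (measurableEmbedding_addLeft t) f (Ioi t)

theorem inv_eq_neg_integral_Ioi_exp_mul {c : ℂ} (hc : c.re < 0) :
    c⁻¹ = -∫ u in Ioi (0 : ℝ), cexp (c * u) := by
  simp [integral_exp_mul_complex_Ioi hc 0, neg_div]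

theorem fourier_div_two_pi_eq_integral (f : ℝ → ℂ) (s : ℝ) :
    𝓕 f (s / (2 * π)) = ∫ x : ℝ, cexp (-(I * s * x)) * f x := by
  rw [Real.fourier_real_eq_integral_exp_smul]
  congr 1 with x
  rw [smul_eq_mul]
  congr 2
  push_cast
  field_simp

theorem integral_exp_mul_fourier_div_two_pi {f : ℝ → ℂ} (hf : Integrable f)
    (hFf : Integrable (𝓕 f)) {v : ℝ} (hv : ContinuousAt f v) :
    ∫ s : ℝ, cexp (I * v * s) * 𝓕 f (s / (2 * π)) = 2 * π * f v := by
  have hπ : 0 < 2 * π := by positivity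
  calc ∫ s : ℝ, cexp (I * v * s) * 𝓕 f (s / (2 * π))
      = |2 * π| • ∫ ξ : ℝ, cexp (I * v * (2 * π * ξ)) * 𝓕 f ξ := by
        rw [← Measure.integral_comp_div _ (2 * π)]
        congr 1 with s
        congr 3
        push_cast
        field_simp
    _ = 2 * π * 𝓕⁻ (𝓕 f) v := by
        rw [abs_of_pos hπ, Real.fourierInv_eq_fourier_neg,
          Real.fourier_real_eq_integral_exp_smul, real_smul]
        push_cast
        congr 2 with ξ
        rw [smul_eq_mul]
        congr 2
        ring
    _ = 2 * π * f v := by rw [hf.fourierInv_fourier_eq hFf hv]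

theorem integrable_exp_mul_exp_mul_prod_Ioi {φ : ℝ → ℂ} (hφ : Integrable φ) {α : ℝ}
    (hα : α < 0) (t : ℝ) :
    Integrable (fun p : ℝ × ℝ => cexp (α * p.2) * (cexp (I * (t + p.2) * p.1) * φ p.1))
      (volume.prod (volume.restrict (Ioi 0))) := by
  refine (hφ.norm.mul_prod (integrableOn_exp_mul_Ioi hα 0)).mono' ?_ ?_
  · refine (Continuous.aestronglyMeasurable (by fun_prop)).mul
      ((Continuous.aestronglyMeasurable (by fun_prop)).mul hφ.aestronglyMeasurable.comp_fst)
  · filter_upwards with p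
    simp [Complex.norm_exp, mul_comm]

theorem fourier_resolvent_neg (α : ℝ) (hα : α < 0) (g : SchwartzMap ℝ ℂ) (t : ℝ) :
    (1/(2*Real.pi) : ℂ) *
      ∫ s : ℝ, (Complex.exp (Complex.I * t * s) / (Complex.I * s + α)) *
        (∫ x : ℝ, Complex.exp (-(Complex.I * s * x)) * g x)
    = -∫ s in Set.Ici t, Complex.exp (-(((t - s : ℝ) : ℂ) * α)) * g s := by
  set F : ℝ → ℂ := fun s => 𝓕 (g : ℝ → ℂ) (s / (2 * π))
  have hFg : Integrable (𝓕 (g : ℝ → ℂ)) := (SchwartzMap.fourierTransformCLM ℂ g).integrable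
  have resolvent (s : ℝ) :
      cexp (I * t * s) / (I * s + α) * (∫ x : ℝ, cexp (-(I * s * x)) * g x)
        = -∫ u in Ioi (0 : ℝ), cexp (α * u) * (cexp (I * (t + u) * s) * F s) := by
    rw [← fourier_div_two_pi_eq_integral, div_eq_mul_inv,
      inv_eq_neg_integral_Ioi_exp_mul (by simpa using hα), mul_neg, neg_mul,
      ← integral_const_mul, ← integral_mul_const]
    congr 2 with u
    rw [← mul_assoc, ← Complex.exp_add, ← Complex.exp_add]
    congr 2
    ring
  have inversion (u : ℝ) :
      ∫ s : ℝ, cexp (α * u) * (cexp (I * (t + u) * s) * F s)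
        = cexp (α * u) * (2 * π * g (t + u)) := by
    rw [integral_const_mul, ← ofReal_add,
      integral_exp_mul_fourier_div_two_pi g.integrable hFg g.continuous.continuousAt]
  rw [integral_Ici_eq_integral_Ioi, ← setIntegral_Ioi_comp_add_left,
    integral_congr_ae (Eventually.of_forall resolvent), integral_neg,
    integral_integral_swap
      (integrable_exp_mul_exp_mul_prod_Ioi (hFg.comp_div (by positivity)) hα t),
    setIntegral_congr_fun measurableSet_Ioi (fun u _ => inversion u), mul_neg,
    ← integral_const_mul]
  congr 2 with u
  push_cast
  field_simp
  rw [mul_comm]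
  congr 2
  ring
end

section
/- Let d ≥ 3, c > 0, and τ̃ ≥ 1 with dist(τ̃, ℤ) ≥ c. Let [τ̃] denote the largest integer strictly less than τ̃. Then for every s < 0, ∑_{n=1}^{[τ̃]} n^{−2/d} e^{(τ̃−n)s} ≤ C(e^{−c|s|}|s|^{2/d−1} + e^{−c|s|}) for a constant C depending only on c and d. -/
/-!
Write `t = |s|`, `N = ⌊τ⌋` and `a = 2 / d ∈ (0, 1)`. Since `τ - N ≥ c`, every factor
`e^{(τ - n) s}` is at most `e^{-ct} e^{-(N - n) t}`, so it suffices to bound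
`∑_{n ≤ N} n^{-a} e^{-(N - n) t}` by `1 + C t^{a - 1}`. The top term is at most `1`; for `n < N`
the inequality `e^{-x} ≤ x^{a - 1}` dominates the rest by `t^{a - 1}` times the discrete Beta sum
`∑_{0 < n < N} n^{-a} (N - n)^{a - 1}`, which is at most `2 / a + 2 / (1 - a)`: on each half of
the range one factor is comparable to its value at `N / 2`, and the other one sums to
`∑_{n ≤ N} n^{-b} ≤ N^{1 - b} / (1 - b)`.
-/

open Real Finset

lemma rpow_le_add_one_rpow_sub {x p : ℝ} (hx : 0 ≤ x) (hp0 : 0 ≤ p) (hp1 : p ≤ 1) :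
    x ^ p ≤ (x + 1) ^ p - p * (x + 1) ^ (p - 1) := by
  have hy : 0 < x + 1 := by linarith
  have hs : -1 ≤ -(x + 1)⁻¹ := neg_le_neg (inv_le_one_of_one_le₀ (by linarith))
  -- Bernoulli's inequality for `x = (x + 1) (1 - (x + 1)⁻¹)`
  calc x ^ p = ((x + 1) * (1 + -(x + 1)⁻¹)) ^ p := by congr 1; field_simp; ring
    _ = (x + 1) ^ p * (1 + -(x + 1)⁻¹) ^ p := mul_rpow hy.le (by linarith)
    _ ≤ (x + 1) ^ p * (1 + p * -(x + 1)⁻¹) := by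
      gcongr; exact rpow_one_add_le_one_add_mul_self hs hp0 hp1
    _ = (x + 1) ^ p - p * (x + 1) ^ (p - 1) := by rw [rpow_sub_one hy.ne']; ring

lemma sum_Icc_rpow_neg_le {b : ℝ} (hb0 : 0 ≤ b) (hb1 : b < 1) {M : ℤ} (hM : 0 ≤ M) :
    ∑ n ∈ Icc 1 M, (n : ℝ) ^ (-b) ≤ (M : ℝ) ^ (1 - b) / (1 - b) := by
  have hb : 0 < 1 - b := by linarith
  induction M, hM using Int.leInduction with
  | base => simp only [Icc_eq_empty_of_lt one_pos, sum_empty]; positivity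
  | succ M hM ih =>
    have step := rpow_le_add_one_rpow_sub (x := M) (by exact_mod_cast hM) hb.le (by linarith)
    rw [sub_sub_cancel_left] at step
    rw [← insert_Icc_right_eq_Icc_add_one (by omega), sum_insert (by simp), Int.cast_add,
      Int.cast_one]
    calc ((M : ℝ) + 1) ^ (-b) + ∑ n ∈ Icc 1 M, (n : ℝ) ^ (-b)
        ≤ ((M : ℝ) + 1) ^ (-b) + (M : ℝ) ^ (1 - b) / (1 - b) := by gcongr
      _ ≤ ((M : ℝ) + 1) ^ (1 - b) / (1 - b) := by
        rw [le_div_iff₀ hb, add_mul, div_mul_cancel₀ _ hb.ne']; linarith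

lemma rpow_neg_le_two_mul_rpow_neg {x y p : ℝ} (hy : 0 < y) (hyx : y ≤ 2 * x) (hp0 : 0 ≤ p)
    (hp1 : p ≤ 1) : x ^ (-p) ≤ 2 * y ^ (-p) :=
  calc x ^ (-p) ≤ (2⁻¹ * y) ^ (-p) :=
        rpow_le_rpow_of_nonpos (by positivity) (by linarith) (by linarith)
    _ = 2 ^ p * y ^ (-p) := by
      rw [mul_rpow (by norm_num) hy.le, inv_rpow (by norm_num), rpow_neg (by norm_num), inv_inv]
    _ ≤ 2 * y ^ (-p) := by
      gcongr
      simpa using rpow_le_rpow_of_exponent_le (by norm_num : (1 : ℝ) ≤ 2) hp1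

lemma rpow_neg_mul_rpow_neg_le {x y p q : ℝ} (hx : 0 < x) (hy : 0 < y) (hp0 : 0 ≤ p)
    (hp1 : p ≤ 1) (hq0 : 0 ≤ q) (hq1 : q ≤ 1) :
    x ^ (-p) * y ^ (-q) ≤ 2 * (x + y) ^ (-q) * x ^ (-p) + 2 * (x + y) ^ (-p) * y ^ (-q) := by
  have hxp : 0 ≤ x ^ (-p) := by positivity
  have hyq : 0 ≤ y ^ (-q) := by positivity
  have hxyp : 0 ≤ (x + y) ^ (-p) := by positivity
  have hxyq : 0 ≤ (x + y) ^ (-q) := by positivity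
  rcases le_total x y with hxy | hxy
  · have := rpow_neg_le_two_mul_rpow_neg (x := y) (y := x + y) (by positivity) (by linarith)
      hq0 hq1
    nlinarith
  · have := rpow_neg_le_two_mul_rpow_neg (x := x) (y := x + y) (by positivity) (by linarith)
      hp0 hp1
    nlinarith

lemma sum_Icc_one_sub_one_reflect (N : ℤ) (f : ℤ → ℝ) :
    ∑ n ∈ Icc 1 (N - 1), f (N - n) = ∑ n ∈ Icc 1 (N - 1), f n :=
  sum_nbij' (N - ·) (N - ·) (by intro n; simp; omega) (by intro n; simp; omega)
    (by simp) (by simp) (by simp)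

lemma sum_Icc_rpow_neg_mul_rpow_neg_le {p q : ℝ} (hp : 0 < p) (hq : 0 < q) (hpq : p + q = 1)
    {N : ℤ} (hN : 1 ≤ N) :
    ∑ n ∈ Icc 1 (N - 1), (n : ℝ) ^ (-p) * ((N : ℝ) - n) ^ (-q) ≤ 2 / q + 2 / p := by
  have hN0 : (0 : ℝ) < N := by exact_mod_cast hN
  have hsum : ∀ b, 0 ≤ b → b < 1 →
      ∑ n ∈ Icc 1 (N - 1), (n : ℝ) ^ (-b) ≤ (N : ℝ) ^ (1 - b) / (1 - b) :=
    fun b hb0 hb1 => (sum_Icc_rpow_neg_le hb0 hb1 (by omega)).trans <| by gcongr; omega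
  calc ∑ n ∈ Icc 1 (N - 1), (n : ℝ) ^ (-p) * ((N : ℝ) - n) ^ (-q)
      ≤ ∑ n ∈ Icc 1 (N - 1),
          (2 * (N : ℝ) ^ (-q) * (n : ℝ) ^ (-p)
            + 2 * (N : ℝ) ^ (-p) * ((N : ℝ) - n) ^ (-q)) := by
        refine sum_le_sum fun n hn => ?_
        obtain ⟨h1, h2⟩ := mem_Icc.1 hn
        have h := rpow_neg_mul_rpow_neg_le (x := n) (y := N - n) (p := p) (q := q)
          (by exact_mod_cast h1) (by rw [sub_pos]; exact_mod_cast (by omega : n < N))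
          hp.le (by linarith) hq.le (by linarith)
        rwa [add_sub_cancel] at h
    _ = 2 * (N : ℝ) ^ (-q) * ∑ n ∈ Icc 1 (N - 1), (n : ℝ) ^ (-p)
          + 2 * (N : ℝ) ^ (-p) * ∑ n ∈ Icc 1 (N - 1), (n : ℝ) ^ (-q) := by
        rw [sum_add_distrib, mul_sum, mul_sum,
          ← sum_Icc_one_sub_one_reflect N (fun n => 2 * (N : ℝ) ^ (-p) * (n : ℝ) ^ (-q))]
        push_cast; rfl
    _ ≤ 2 * (N : ℝ) ^ (-q) * ((N : ℝ) ^ q / q)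
          + 2 * (N : ℝ) ^ (-p) * ((N : ℝ) ^ p / p) := by
        gcongr
        · simpa [← hpq] using hsum p hp.le (by linarith)
        · simpa [← hpq] using hsum q hq.le (by linarith)
    _ = 2 / q + 2 / p := by
        rw [rpow_neg hN0.le, rpow_neg hN0.le]
        field_simp

lemma exp_neg_le_rpow_neg {x b : ℝ} (hx : 0 < x) (hb0 : 0 ≤ b) (hb1 : b ≤ 1) :
    exp (-x) ≤ x ^ (-b) := by
  have : x ^ b ≤ exp x :=
    calc x ^ b ≤ (1 + x) ^ b := by gcongr; linarith
      _ ≤ 1 + b * x := rpow_one_add_le_one_add_mul_self (by linarith) hb0 hb1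
      _ ≤ x + 1 := by nlinarith
      _ ≤ exp x := add_one_le_exp x
  rw [rpow_neg hx.le, exp_neg]
  exact inv_anti₀ (by positivity) this

lemma sum_rpow_neg_mul_exp_le {a t : ℝ} (ha0 : 0 < a) (ha1 : a < 1) (ht : 0 < t) {N : ℤ}
    (hN : 1 ≤ N) :
    ∑ n ∈ Icc 1 N, (n : ℝ) ^ (-a) * exp (-((N - n) * t))
      ≤ 1 + (2 / (1 - a) + 2 / a) * t ^ (-(1 - a)) := by
  rw [← insert_Icc_sub_one_right_eq_Icc hN, sum_insert (by simp)]
  have htop : (N : ℝ) ^ (-a) * exp (-((N - N) * t)) ≤ 1 := by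
    simpa using rpow_le_one_of_one_le_of_nonpos (by exact_mod_cast hN) (by linarith : -a ≤ 0)
  have hrest : ∑ n ∈ Icc 1 (N - 1), (n : ℝ) ^ (-a) * exp (-((N - n) * t))
      ≤ t ^ (-(1 - a))
          * ∑ n ∈ Icc 1 (N - 1), (n : ℝ) ^ (-a) * ((N : ℝ) - n) ^ (-(1 - a)) := by
    rw [mul_sum]
    refine sum_le_sum fun n hn => ?_
    obtain ⟨h1, h2⟩ := mem_Icc.1 hn
    have hn0 : (0 : ℝ) ≤ n := by exact_mod_cast (by omega : 0 ≤ n)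
    have hgap : (0 : ℝ) < N - n := by rw [sub_pos]; exact_mod_cast (by omega : n < N)
    calc (n : ℝ) ^ (-a) * exp (-((N - n) * t))
        ≤ (n : ℝ) ^ (-a) * ((N - n) * t) ^ (-(1 - a)) := by
          gcongr; exact exp_neg_le_rpow_neg (by positivity) (by linarith) (by linarith)
      _ = _ := by rw [mul_rpow hgap.le ht.le]; ring
  have hbeta := sum_Icc_rpow_neg_mul_rpow_neg_le ha0 (by linarith : 0 < 1 - a) (by ring) hN
  have := mul_le_mul_of_nonneg_left hbeta (by positivity : 0 ≤ t ^ (-(1 - a)))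
  linarith

lemma exp_sub_mul_neg_le {τ c t N : ℝ} (hgap : c ≤ τ - N) (ht : 0 ≤ t) (n : ℝ) :
    exp ((τ - n) * -t) ≤ exp (-(c * t)) * exp (-((N - n) * t)) := by
  rw [← exp_add]
  gcongr
  nlinarith

theorem sum_bound_I2_general (d : ℕ) (hd : 3 ≤ d) (c : ℝ) :
    ∃ C > (0:ℝ), ∀ τ : ℝ, 1 ≤ τ → (∀ m : ℤ, c ≤ |τ - m|) →
      ∀ s : ℝ, s < 0 →
        (∑ n ∈ Finset.Icc (1:ℤ) ⌊τ⌋, (n:ℝ) ^ (-(2:ℝ)/d) * Real.exp ((τ - n) * s))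
          ≤ C * (Real.exp (-(c*|s|)) * |s| ^ ((2:ℝ)/d - 1) + Real.exp (-(c*|s|))) := by
  set a : ℝ := 2 / d
  have ha0 : 0 < a := by positivity
  have ha1 : a < 1 := by
    rw [div_lt_one (by positivity)]; exact_mod_cast (by omega : 2 < d)
  refine ⟨1 + (2 / (1 - a) + 2 / a), by have := sub_pos.2 ha1; positivity,
    fun τ hτ hdist s hs => ?_⟩
  obtain ⟨t, ht, rfl⟩ : ∃ t, 0 < t ∧ s = -t := ⟨-s, by linarith, by ring⟩
  have hN : 1 ≤ ⌊τ⌋ := Int.le_floor.2 (by exact_mod_cast hτ)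
  have hgap : c ≤ τ - ⌊τ⌋ := by
    simpa [abs_of_nonneg (Int.fract_nonneg τ)] using hdist ⌊τ⌋
  rw [abs_neg, abs_of_pos ht, neg_div, show a - 1 = -(1 - a) by ring]
  calc ∑ n ∈ Icc 1 ⌊τ⌋, (n : ℝ) ^ (-a) * exp ((τ - n) * -t)
      ≤ ∑ n ∈ Icc 1 ⌊τ⌋,
          exp (-(c * t)) * ((n : ℝ) ^ (-a) * exp (-((⌊τ⌋ - n) * t))) := by
        refine sum_le_sum fun n hn => ?_
        have hn0 : (0 : ℝ) ≤ n := by exact_mod_cast (by linarith [(mem_Icc.1 hn).1] : 0 ≤ n)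
        rw [mul_left_comm]
        gcongr
        exact exp_sub_mul_neg_le hgap ht.le n
    _ = exp (-(c * t)) * ∑ n ∈ Icc 1 ⌊τ⌋, (n : ℝ) ^ (-a) * exp (-((⌊τ⌋ - n) * t)) :=
        (mul_sum ..).symm
    _ ≤ exp (-(c * t)) * (1 + (2 / (1 - a) + 2 / a) * t ^ (-(1 - a))) := by
        gcongr; exact sum_rpow_neg_mul_exp_le ha0 ha1 ht hN
    _ ≤ (1 + (2 / (1 - a) + 2 / a))
          * (exp (-(c * t)) * t ^ (-(1 - a)) + exp (-(c * t))) := by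
        have : 0 ≤ 2 / (1 - a) + 2 / a := by have := sub_pos.2 ha1; positivity
        have : 0 ≤ exp (-(c * t)) * t ^ (-(1 - a)) := by positivity
        nlinarith [exp_pos (-(c * t))]

theorem sum_bound_I2 (d : ℕ) (hd : 3 ≤ d) (c : ℝ) (hc : 0 < c) :
    ∃ C > (0:ℝ), ∀ τ : ℝ, 1 ≤ τ → (∀ m : ℤ, c ≤ |τ - m|) →
      ∀ s : ℝ, s < 0 →
        (∑ n ∈ Finset.Icc (1:ℤ) ⌊τ⌋, (n:ℝ) ^ (-(2:ℝ)/d) * Real.exp ((τ - n) * s))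
          ≤ C * (Real.exp (-(c*|s|)) * |s| ^ ((2:ℝ)/d - 1) + Real.exp (-(c*|s|))) :=
  sum_bound_I2_general d hd c
end
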